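/- arXiv:1609.00522 — 2 statements merged into one kernel-verified Lean document; each statement's English description precedes it below -/
import Mathlib

section
/- Let d, r ≥ 1, m = d·r, and let σ be the m-cycle (1 2 ⋯ m) in S_m. Let q be the partition of {1,…,m} into orbits of ⟨σ^r⟩ (each of size d). For 1 ≤ r' ≤ r, the number of partitions p of {1,…,m} into d·r' blocks that are transverse to q (no block of p contains two elements equivalent under q), refine-compatible as in the paper (p is coarser than the singleton refinement compatible with q and is fixed by σ^r) equals S(r, r') · d^{r - r'}, where S(r,r') is the Stirling number of the second kind. -/
/-- `P` is a partition of `Fin i` into `j` nonempty blocks. -/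
def IsPartitionInto (i j : ℕ) (P : Finset (Finset (Fin i))) : Prop :=
  (∀ B ∈ P, B.Nonempty) ∧ (∀ x : Fin i, ∃ B ∈ P, x ∈ B) ∧
    (∀ B ∈ P, ∀ B' ∈ P, B ≠ B' → Disjoint B B') ∧ P.card = j

/-- Stirling number of the second kind. -/
noncomputable def stirling2 (i j : ℕ) : ℕ :=
  Nat.card {P : Finset (Finset (Fin i)) // IsPartitionInto i j P}

/-- `P` is a partition of `Fin m` into nonempty blocks. -/
def IsPartition {m : ℕ} (P : Finset (Finset (Fin m))) : Prop :=
  (∀ B ∈ P, B.Nonempty) ∧ (∀ x : Fin m, ∃ B ∈ P, x ∈ B) ∧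
    (∀ B ∈ P, ∀ B' ∈ P, B ≠ B' → Disjoint B B')

/-- The natural action of a permutation on set partitions (blockwise image). -/
def permAct {m : ℕ} (σ : Equiv.Perm (Fin m)) (P : Finset (Finset (Fin m))) :
    Finset (Finset (Fin m)) :=
  P.image fun B => B.image fun x => σ x

/-- The orbit of `x` under the cyclic subgroup generated by `τ`. -/
def orbitBlock {m : ℕ} (τ : Equiv.Perm (Fin m)) (x : Fin m) : Finset (Fin m) :=
  (Finset.range m).image fun k => (τ ^ k) x

/-- The partition of `Fin m` into orbits of the subgroup generated by `τ`. -/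
def orbitPartition {m : ℕ} (τ : Equiv.Perm (Fin m)) : Finset (Finset (Fin m)) :=
  Finset.univ.image (orbitBlock τ)

/-!
Write a point of `Fin (d * r)` as `finProdFinEquiv (c, i) = i + r * c`, with level `c : Fin d`
over `i : Fin r`. Then `σ ^ r` raises every level by one and the blocks of `q` are the fibres over
the points of `Fin r`. The blocks of a transverse `σ ^ r`-fixed partition project onto a partition
`P` of `Fin r`, and over each block `b` of `P` lie exactly `d` blocks: the level translates of the
graph of one function `b → Fin d`. Normalising these functions to vanish at the minimum of each
block makes them unique, so the partitions with `d * r'` blocks correspond to a partition of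
`Fin r` into `r'` blocks together with a function `Fin r → Fin d` vanishing at the `r'` block
minima, of which there are `d ^ (r - r')`.
-/

open Finset Fin.NatCast

theorem isPartitionInto_iff {i j : ℕ} {P : Finset (Finset (Fin i))} :
    IsPartitionInto i j P ↔ IsPartition P ∧ P.card = j := by
  simp only [IsPartitionInto, IsPartition, and_assoc]

namespace IsPartition

variable {m : ℕ} {p q : Finset (Finset (Fin m))}

theorem eq_of_mem (hp : IsPartition p) {B B' : Finset (Fin m)} (hB : B ∈ p) (hB' : B' ∈ p)
    {x : Fin m} (hx : x ∈ B) (hx' : x ∈ B') : B = B' := by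
  by_contra h
  exact disjoint_left.1 (hp.2.2 B hB B' hB' h) hx hx'

theorem eq_of_subset (hp : IsPartition p) (hq : IsPartition q) (h : q ⊆ p) : q = p := by
  refine Subset.antisymm h fun B hB => ?_
  obtain ⟨x, hx⟩ := hp.1 B hB
  obtain ⟨B', hB', hxB'⟩ := hq.2.1 x
  rwa [hp.eq_of_mem hB (h hB') hx hxB']

end IsPartition

theorem permAct_eq_self_iff {m : ℕ} {σ : Equiv.Perm (Fin m)} {p : Finset (Finset (Fin m))} :
    permAct σ p = p ↔ ∀ B ∈ p, B.image σ ∈ p := by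
  refine ⟨fun h B hB => h ▸ mem_image_of_mem _ hB, fun h => ?_⟩
  refine eq_of_subset_of_card_le (fun X hX => ?_) ?_
  · obtain ⟨B, hB, rfl⟩ := mem_image.1 hX
    exact h B hB
  · rw [permAct, card_image_of_injective _ (image_injective σ.injective)]

theorem image_pow_mem_of_permAct_eq {m : ℕ} {σ : Equiv.Perm (Fin m)}
    {p : Finset (Finset (Fin m))} (h : permAct σ p = p) {B : Finset (Fin m)} (hB : B ∈ p)
    (k : ℕ) : B.image ⇑(σ ^ k) ∈ p := by
  induction k with
  | zero => simpa using hB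
  | succ k ih =>
    rw [pow_succ', Equiv.Perm.coe_mul, ← image_image]
    exact permAct_eq_self_iff.1 h _ ih

theorem val_finRotate_pow_apply {m : ℕ} (k : ℕ) (x : Fin m) :
    ((finRotate m ^ k) x : ℕ) = (x + k) % m := by
  induction k with
  | zero => simp [Nat.mod_eq_of_lt x.2]
  | succ k ih =>
    have := x.neZero
    rw [pow_succ', Equiv.Perm.mul_apply, finRotate_apply, Fin.val_add, ih, Fin.val_one',
      Nat.mod_add_mod, Nat.add_mod_mod, ← add_assoc]

theorem add_mul_mod_mul_of_lt {i r d : ℕ} (n : ℕ) (hi : i < r) :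
    (i + r * n) % (d * r) = i + r * (n % d) := by
  have hr : 0 < r := by omega
  rw [mul_comm d, Nat.mod_mul, Nat.add_mul_mod_self_left, Nat.mod_eq_of_lt hi,
    Nat.add_mul_div_left _ _ hr, Nat.div_eq_of_lt hi, zero_add]

@[simp]
theorem modNat_finProdFinEquiv {m n : ℕ} (c : Fin m) (i : Fin n) :
    (finProdFinEquiv (c, i)).modNat = i :=
  congrArg Prod.snd (finProdFinEquiv.symm_apply_apply (c, i))

theorem card_fun_eq_zero_on {α β : Type*} [Fintype α] [DecidableEq α] [Fintype β] [Zero β]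
    (S : Finset α) :
    Nat.card {f : α → β // ∀ i ∈ S, f i = 0} =
      Fintype.card β ^ (Fintype.card α - S.card) := by
  let e : {f : α → β // ∀ i ∈ S, f i = 0} ≃ ({i // i ∉ S} → β) :=
    { toFun := fun f i => f.1 i
      invFun g := ⟨fun i => if h : i ∈ S then 0 else g ⟨i, h⟩, fun i hi => dif_pos hi⟩
      left_inv := fun ⟨f, hf⟩ => Subtype.ext <| funext fun i => by
        by_cases h : i ∈ S <;> simp [h, hf]
      right_inv := fun g => funext fun i => by simp [i.2] }
  rw [Nat.card_congr e, Nat.card_eq_fintype_card, Fintype.card_fun, Fintype.card_subtype_compl,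
    Fintype.card_coe]

section BlockMins

variable {r : ℕ} {P : Finset (Finset (Fin r))}

def blockMins (P : Finset (Finset (Fin r))) : Finset (Fin r) :=
  univ.filter fun i => ∀ b ∈ P, i ∈ b → ∀ j ∈ b, i ≤ j

theorem min'_mem_blockMins (hP : IsPartition P) {b : Finset (Fin r)} (hb : b ∈ P) :
    b.min' (hP.1 b hb) ∈ blockMins P := by
  refine mem_filter.2 ⟨mem_univ _, fun b' hb' hmin j hj => ?_⟩
  rw [hP.eq_of_mem hb' hb hmin (min'_mem _ _)] at hj
  exact min'_le _ _ hj

theorem eq_min'_of_mem_blockMins (hP : IsPartition P) {i : Fin r} (hi : i ∈ blockMins P)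
    {b : Finset (Fin r)} (hb : b ∈ P) (hib : i ∈ b) : i = b.min' (hP.1 b hb) :=
  le_antisymm ((mem_filter.1 hi).2 b hb hib _ (min'_mem _ _)) (min'_le _ _ hib)

theorem card_blockMins (hP : IsPartition P) : (blockMins P).card = P.card := by
  refine (card_bij (fun b hb => b.min' (hP.1 b hb)) (fun b hb => min'_mem_blockMins hP hb)
    (fun b hb b' hb' h => hP.eq_of_mem hb hb' (min'_mem _ _) (h.symm ▸ min'_mem _ _))
    (fun i hi => ?_)).symm
  obtain ⟨b, hb, hib⟩ := hP.2.1 i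
  exact ⟨b, hb, (eq_min'_of_mem_blockMins hP hi hb hib).symm⟩

end BlockMins

section Lift

variable {d r : ℕ}

local notation "ρ" => finRotate (d * r) ^ r

def liftBlock (φ : Fin r → Fin d) (b : Finset (Fin r)) (c : Fin d) : Finset (Fin (d * r)) :=
  b.image fun i => finProdFinEquiv (φ i + c, i)

def liftPartition (P : Finset (Finset (Fin r))) (φ : Fin r → Fin d) :
    Finset (Finset (Fin (d * r))) :=
  (P ×ˢ univ).image fun bc => liftBlock φ bc.1 bc.2

def projPartition (p : Finset (Finset (Fin (d * r)))) : Finset (Finset (Fin r)) :=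
  p.image (image Fin.modNat)

variable {P : Finset (Finset (Fin r))} {φ : Fin r → Fin d}

theorem mem_liftBlock {b : Finset (Fin r)} {c c' : Fin d} {i : Fin r} :
    finProdFinEquiv (c', i) ∈ liftBlock φ b c ↔ i ∈ b ∧ c' = φ i + c := by
  simp [liftBlock, Prod.ext_iff, eq_comm]

theorem mem_liftPartition {X : Finset (Fin (d * r))} :
    X ∈ liftPartition P φ ↔ ∃ b ∈ P, ∃ c, liftBlock φ b c = X := by
  simp [liftPartition]

theorem mem_image_modNat {B : Finset (Fin (d * r))} {i : Fin r} :
    i ∈ B.image Fin.modNat ↔ ∃ c, finProdFinEquiv (c, i) ∈ B := by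
  simp [finProdFinEquiv.surjective.exists]

theorem image_modNat_liftBlock (b : Finset (Fin r)) (c : Fin d) :
    (liftBlock φ b c).image Fin.modNat = b := by
  simp [liftBlock, image_image, Function.comp_def]

theorem liftBlock_inj (hP : IsPartition P) {b b' : Finset (Fin r)} {c c' : Fin d}
    (hb : b ∈ P) (hb' : b' ∈ P) (h : liftBlock φ b c = liftBlock φ b' c') :
    b = b' ∧ c = c' := by
  obtain ⟨i, hi⟩ := hP.1 b hb
  have hmem : finProdFinEquiv (φ i + c, i) ∈ liftBlock φ b' c' :=
    h ▸ mem_liftBlock.2 ⟨hi, rfl⟩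
  obtain ⟨hi', hc⟩ := mem_liftBlock.1 hmem
  exact ⟨hP.eq_of_mem hb hb' hi hi', add_left_cancel hc⟩

theorem card_liftPartition (hP : IsPartition P) : (liftPartition P φ).card = P.card * d := by
  rw [liftPartition, card_image_of_injOn, card_product, card_univ, Fintype.card_fin]
  rintro ⟨b, c⟩ hbc ⟨b', c'⟩ hbc' h
  simp only [coe_product, coe_univ, Set.mem_prod, mem_coe, Set.mem_univ, and_true] at hbc hbc'
  obtain ⟨rfl, rfl⟩ := liftBlock_inj hP hbc hbc' h
  rfl

theorem liftPartition_transverse : ∀ B ∈ liftPartition P φ, ∀ (i : Fin r) (c c' : Fin d),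
    finProdFinEquiv (c, i) ∈ B → finProdFinEquiv (c', i) ∈ B → c = c' := by
  simp only [mem_liftPartition]
  rintro _ ⟨b, -, c₀, rfl⟩ i c c' hc hc'
  rw [(mem_liftBlock.1 hc).2, (mem_liftBlock.1 hc').2]

variable [NeZero d] {p : Finset (Finset (Fin (d * r)))}

theorem rotate_pow_apply_finProdFinEquiv (k : ℕ) (c : Fin d) (i : Fin r) :
    (ρ ^ k) (finProdFinEquiv (c, i)) = finProdFinEquiv (c + (k : Fin d), i) := by
  ext
  rw [← pow_mul, val_finRotate_pow_apply, finProdFinEquiv_apply_val, finProdFinEquiv_apply_val,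
    add_assoc, ← mul_add, add_mul_mod_mul_of_lt _ i.2, Fin.val_add, Fin.val_natCast,
    Nat.add_mod_mod]

theorem orbitBlock_finProdFinEquiv (c : Fin d) (i : Fin r) :
    orbitBlock ρ (finProdFinEquiv (c, i)) = univ.image fun c' => finProdFinEquiv (c', i) := by
  ext x
  simp only [orbitBlock, mem_image, mem_range, mem_univ, true_and,
    rotate_pow_apply_finProdFinEquiv]
  constructor
  · rintro ⟨k, -, rfl⟩
    exact ⟨_, rfl⟩
  · rintro ⟨c', rfl⟩
    refine ⟨(c' - c : Fin d), (c' - c).2.trans_le (Nat.le_mul_of_pos_right d i.pos), ?_⟩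
    rw [Fin.cast_val_eq_self, add_sub_cancel]

theorem transverse_iff :
    (∀ B ∈ p, ∀ C ∈ orbitPartition ρ, (B ∩ C).card ≤ 1) ↔
      ∀ B ∈ p, ∀ (i : Fin r) (c c' : Fin d),
        finProdFinEquiv (c, i) ∈ B → finProdFinEquiv (c', i) ∈ B → c = c' := by
  refine forall₂_congr fun B hB => ⟨fun h i c c' hc hc' => ?_, fun h C hC => ?_⟩
  · have hC : univ.image (fun c' => finProdFinEquiv (c', i)) ∈ orbitPartition ρ :=
      orbitBlock_finProdFinEquiv c i ▸ mem_image_of_mem _ (mem_univ _)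
    have := card_le_one.1 (h _ hC) _ (mem_inter.2 ⟨hc, mem_image_of_mem _ (mem_univ c)⟩) _
      (mem_inter.2 ⟨hc', mem_image_of_mem _ (mem_univ c')⟩)
    exact (Prod.ext_iff.1 (finProdFinEquiv.injective this)).1
  · obtain ⟨x, -, rfl⟩ := mem_image.1 hC
    obtain ⟨⟨c, i⟩, rfl⟩ := finProdFinEquiv.surjective x
    simp only [orbitBlock_finProdFinEquiv, card_le_one, mem_inter, mem_image, mem_univ, true_and]
    rintro _ ⟨hxB, c₁, rfl⟩ _ ⟨hyB, c₂, rfl⟩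
    rw [h i c₁ c₂ hxB hyB]

theorem image_liftBlock (b : Finset (Fin r)) (c : Fin d) (k : ℕ) :
    (liftBlock φ b c).image ⇑(ρ ^ k) = liftBlock φ b (c + (k : Fin d)) := by
  simp only [liftBlock, image_image, Function.comp_def, rotate_pow_apply_finProdFinEquiv,
    add_assoc]

theorem projPartition_liftPartition : projPartition (liftPartition P φ) = P := by
  simp only [projPartition, liftPartition, image_image, Function.comp_def, image_modNat_liftBlock]
  exact product_image_fst univ_nonempty

theorem isPartition_liftPartition (hP : IsPartition P) : IsPartition (liftPartition P φ) := by
  refine ⟨?_, fun x => ?_, ?_⟩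
  · simp only [mem_liftPartition]
    rintro _ ⟨b, hb, c, rfl⟩
    exact (hP.1 b hb).image _
  · obtain ⟨⟨c, i⟩, rfl⟩ := finProdFinEquiv.surjective x
    obtain ⟨b, hb, hi⟩ := hP.2.1 i
    exact ⟨_, mem_liftPartition.2 ⟨b, hb, c - φ i, rfl⟩,
      mem_liftBlock.2 ⟨hi, (add_sub_cancel _ _).symm⟩⟩
  · simp only [mem_liftPartition]
    rintro _ ⟨b, hb, c, rfl⟩ _ ⟨b', hb', c', rfl⟩ hne
    refine disjoint_left.2 fun x hx hx' => hne ?_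
    obtain ⟨⟨k, i⟩, rfl⟩ := finProdFinEquiv.surjective x
    obtain ⟨hi, hk⟩ := mem_liftBlock.1 hx
    obtain ⟨hi', hk'⟩ := mem_liftBlock.1 hx'
    rw [hP.eq_of_mem hb hb' hi hi', add_left_cancel (hk.symm.trans hk')]

theorem permAct_liftPartition : permAct ρ (liftPartition P φ) = liftPartition P φ := by
  refine permAct_eq_self_iff.2 ?_
  simp only [mem_liftPartition]
  rintro _ ⟨b, hb, c, rfl⟩
  exact ⟨b, hb, c + 1, by simpa using (image_liftBlock b c 1).symm⟩

theorem liftPartition_inj (hP : IsPartition P) {φ' : Fin r → Fin d}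
    (hφ : ∀ i ∈ blockMins P, φ i = 0) (hφ' : ∀ i ∈ blockMins P, φ' i = 0)
    (h : liftPartition P φ = liftPartition P φ') : φ = φ' := by
  funext i
  obtain ⟨b, hb, hib⟩ := hP.2.1 i
  have hmin := min'_mem_blockMins hP hb
  have h₀ : finProdFinEquiv (0, b.min' _) ∈ liftBlock φ b 0 :=
    mem_liftBlock.2 ⟨min'_mem _ _, by rw [hφ _ hmin, add_zero]⟩
  have h₀' : finProdFinEquiv (0, b.min' _) ∈ liftBlock φ' b 0 :=
    mem_liftBlock.2 ⟨min'_mem _ _, by rw [hφ' _ hmin, add_zero]⟩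
  have hX : liftBlock φ b 0 ∈ liftPartition P φ' :=
    h ▸ mem_liftPartition.2 ⟨b, hb, 0, rfl⟩
  have hX' : liftBlock φ' b 0 ∈ liftPartition P φ' := mem_liftPartition.2 ⟨b, hb, 0, rfl⟩
  have heq := (isPartition_liftPartition hP).eq_of_mem hX hX' h₀ h₀'
  have hi : finProdFinEquiv (φ i + 0, i) ∈ liftBlock φ' b 0 :=
    heq ▸ mem_liftBlock.2 ⟨hib, rfl⟩
  simpa using (mem_liftBlock.1 hi).2

theorem eq_image_rotate_pow_of_mem (hp : IsPartition p)
    (hfix : permAct ρ p = p) {B B' : Finset (Fin (d * r))} (hB : B ∈ p) (hB' : B' ∈ p)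
    {i : Fin r} {c c' : Fin d} (hc : finProdFinEquiv (c, i) ∈ B)
    (hc' : finProdFinEquiv (c', i) ∈ B') : B' = B.image ⇑(ρ ^ (c' - c : Fin d).val) := by
  refine hp.eq_of_mem hB' (image_pow_mem_of_permAct_eq hfix hB _) hc' (mem_image.2 ⟨_, hc, ?_⟩)
  rw [rotate_pow_apply_finProdFinEquiv, Fin.cast_val_eq_self, add_sub_cancel]

theorem image_modNat_eq_of_mem (hp : IsPartition p)
    (hfix : permAct ρ p = p) {B B' : Finset (Fin (d * r))} (hB : B ∈ p) (hB' : B' ∈ p)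
    {i : Fin r} {c c' : Fin d} (hc : finProdFinEquiv (c, i) ∈ B)
    (hc' : finProdFinEquiv (c', i) ∈ B') : B'.image Fin.modNat = B.image Fin.modNat := by
  rw [eq_image_rotate_pow_of_mem hp hfix hB hB' hc hc', image_image]
  refine image_congr fun x _ => ?_
  obtain ⟨⟨k, j⟩, rfl⟩ := finProdFinEquiv.surjective x
  simp [rotate_pow_apply_finProdFinEquiv]

theorem isPartition_projPartition (hp : IsPartition p) (hfix : permAct ρ p = p) :
    IsPartition (projPartition p) := by
  simp only [IsPartition, projPartition, mem_image, forall_exists_index, and_imp,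
    forall_apply_eq_imp_iff₂]
  refine ⟨fun B hB => (hp.1 B hB).image _, fun i => ?_, fun B hB B' hB' hne => ?_⟩
  · obtain ⟨B, hB, hi⟩ := hp.2.1 (finProdFinEquiv (0, i))
    exact ⟨_, ⟨B, hB, rfl⟩, mem_image_modNat.2 ⟨0, hi⟩⟩
  · refine disjoint_left.2 fun i hi hi' => hne ?_
    obtain ⟨c, hc⟩ := mem_image_modNat.1 hi
    obtain ⟨c', hc'⟩ := mem_image_modNat.1 hi'
    exact (image_modNat_eq_of_mem hp hfix hB hB' hc hc').symm

theorem exists_liftBlock_mem (hp : IsPartition p) (hfix : permAct ρ p = p)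
    (htr : ∀ B ∈ p, ∀ (i : Fin r) (c c' : Fin d),
      finProdFinEquiv (c, i) ∈ B → finProdFinEquiv (c', i) ∈ B → c = c') :
    ∃ φ : Fin r → Fin d, (∀ i ∈ blockMins (projPartition p), φ i = 0) ∧
      ∀ b ∈ projPartition p, liftBlock φ b 0 ∈ p := by
  have hP := isPartition_projPartition hp hfix
  choose blk hblk hmem using fun i : Fin r => hp.2.1 (finProdFinEquiv (0, i))
  have proj_blk {b} (hb : b ∈ projPartition p) {i} (hi : i ∈ b) :
      (blk i).image Fin.modNat = b := by
    obtain ⟨B, hB, rfl⟩ := mem_image.1 hb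
    obtain ⟨c, hc⟩ := mem_image_modNat.1 hi
    exact image_modNat_eq_of_mem hp hfix hB (hblk i) hc (hmem i)
  choose bOf hbOf hi_bOf using hP.2.1
  -- `φ i` is the level of the fibre over `i` in the block through `(0, m)`, `m` the minimum
  -- of the block of `projPartition p` containing `i`
  have exists_level (i : Fin r) :
      ∃ c, finProdFinEquiv (c, i) ∈ blk ((bOf i).min' (hP.1 _ (hbOf i))) := by
    rw [← mem_image_modNat, proj_blk (hbOf i) (min'_mem _ _)]
    exact hi_bOf i
  choose φ hφ using exists_level
  refine ⟨φ, fun i hi => ?_, fun b hb => ?_⟩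
  · have hφi := hφ i
    rw [← eq_min'_of_mem_blockMins hP hi (hbOf i) (hi_bOf i)] at hφi
    exact htr _ (hblk i) i _ _ hφi (hmem i)
  · have hmin : ∀ j ∈ b, (bOf j).min' (hP.1 _ (hbOf j)) = b.min' (hP.1 b hb) := fun j hj => by
      simp only [hP.eq_of_mem (hbOf j) hb (hi_bOf j) hj]
    suffices liftBlock φ b 0 = blk (b.min' (hP.1 b hb)) from this ▸ hblk _
    ext x
    obtain ⟨⟨c, j⟩, rfl⟩ := finProdFinEquiv.surjective x
    rw [mem_liftBlock, add_zero]
    constructor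
    · rintro ⟨hj, rfl⟩
      simpa [hmin j hj] using hφ j
    · intro hc
      have hj : j ∈ b := proj_blk hb (min'_mem _ _) ▸ mem_image_modNat.2 ⟨c, hc⟩
      exact ⟨hj, htr _ (hblk _) j _ _ hc (hmin j hj ▸ hφ j)⟩

theorem exists_liftPartition_eq (hp : IsPartition p) (hfix : permAct ρ p = p)
    (htr : ∀ B ∈ p, ∀ (i : Fin r) (c c' : Fin d),
      finProdFinEquiv (c, i) ∈ B → finProdFinEquiv (c', i) ∈ B → c = c') :
    ∃ φ : Fin r → Fin d, (∀ i ∈ blockMins (projPartition p), φ i = 0) ∧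
      liftPartition (projPartition p) φ = p := by
  obtain ⟨φ, hφ, hmem⟩ := exists_liftBlock_mem hp hfix htr
  refine ⟨φ, hφ, hp.eq_of_subset (isPartition_liftPartition (isPartition_projPartition hp hfix))
    fun X hX => ?_⟩
  obtain ⟨b, hb, c, rfl⟩ := mem_liftPartition.1 hX
  simpa [image_liftBlock] using image_pow_mem_of_permAct_eq hfix (hmem b hb) c.val

def IsTransverseFixed (r' : ℕ) (p : Finset (Finset (Fin (d * r)))) : Prop :=
  IsPartition p ∧ p.card = d * r' ∧ permAct ρ p = p ∧
    ∀ B ∈ p, ∀ C ∈ orbitPartition ρ, (B ∩ C).card ≤ 1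

theorem isTransverseFixed_liftPartition {r' : ℕ} {P : Finset (Finset (Fin r))}
    (hP : IsPartitionInto r r' P) (φ : Fin r → Fin d) :
    IsTransverseFixed r' (liftPartition P φ) := by
  obtain ⟨hPart, rfl⟩ := isPartitionInto_iff.1 hP
  exact ⟨isPartition_liftPartition hPart, by rw [card_liftPartition hPart, mul_comm],
    permAct_liftPartition, transverse_iff.2 liftPartition_transverse⟩

theorem IsTransverseFixed.isPartitionInto_projPartition {r' : ℕ} (hp : IsTransverseFixed r' p) :
    IsPartitionInto r r' (projPartition p) := by
  obtain ⟨hp, hcard, hfix, htr⟩ := hp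
  have hP := isPartition_projPartition hp hfix
  obtain ⟨φ, -, hφ⟩ := exists_liftPartition_eq hp hfix (transverse_iff.1 htr)
  refine isPartitionInto_iff.2 ⟨hP, Nat.eq_of_mul_eq_mul_left (Nat.pos_of_neZero d) ?_⟩
  have hcard' := card_liftPartition hP (φ := φ)
  rw [hφ, hcard] at hcard'
  rw [hcard', mul_comm]

noncomputable def liftEquiv (r' : ℕ) :
    (Σ P : {P // IsPartitionInto r r' P},
      {φ : Fin r → Fin d // ∀ i ∈ blockMins P.1, φ i = 0})
      ≃ {p : Finset (Finset (Fin (d * r))) // IsTransverseFixed r' p} :=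
  Equiv.ofBijective
    (fun x => ⟨liftPartition x.1.1 x.2.1, isTransverseFixed_liftPartition x.1.2 _⟩)
    ⟨by
      rintro ⟨⟨P, hP⟩, ⟨φ, hφ⟩⟩ ⟨⟨P', hP'⟩, ⟨φ', hφ'⟩⟩ h
      have h : liftPartition P φ = liftPartition P' φ' := congrArg Subtype.val h
      obtain rfl : P = P' := by
        rw [← projPartition_liftPartition (P := P) (φ := φ), h, projPartition_liftPartition]
      obtain rfl := liftPartition_inj (isPartitionInto_iff.1 hP).1 hφ hφ' h
      rfl,
    fun ⟨p, hp⟩ => by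
      obtain ⟨φ, hφ, h⟩ := exists_liftPartition_eq hp.1 hp.2.2.1 (transverse_iff.1 hp.2.2.2)
      exact ⟨⟨⟨_, hp.isPartitionInto_projPartition⟩, ⟨φ, hφ⟩⟩, Subtype.ext h⟩⟩

end Lift

theorem transverse_fixed_partition_count_general (d r r' : ℕ)
    (hd : 1 ≤ d) :
    Nat.card {p : Finset (Finset (Fin (d * r))) //
      IsPartition p ∧ p.card = d * r' ∧
      permAct ((finRotate (d * r)) ^ r) p = p ∧
      ∀ B ∈ p, ∀ C ∈ orbitPartition ((finRotate (d * r)) ^ r), (B ∩ C).card ≤ 1}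
    = stirling2 r r' * d ^ (r - r') := by
  classical
  have : NeZero d := ⟨by omega⟩
  have hfiber (P : {P // IsPartitionInto r r' P}) :
      Nat.card {φ : Fin r → Fin d // ∀ i ∈ blockMins P.1, φ i = 0} = d ^ (r - r') := by
    obtain ⟨hP, hcard⟩ := isPartitionInto_iff.1 P.2
    rw [card_fun_eq_zero_on, card_blockMins hP, hcard, Fintype.card_fin, Fintype.card_fin]
  refine (Nat.card_congr (liftEquiv (d := d) r')).symm.trans ?_
  rw [Nat.card_sigma]
  simp only [hfiber, sum_const, card_univ, smul_eq_mul, stirling2, Nat.card_eq_fintype_card]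

/-- With `m = d·r`, `σ` the `m`-cycle and `q` the orbit partition of `⟨σ^r⟩`, the
number of partitions `p` of `{1,…,m}` into `d·r'` blocks which are fixed by `σ^r`
and transverse to `q` (each block of `p` meets each block of `q` in at most one
point) equals `S(r,r')·d^(r-r')`. -/
theorem transverse_fixed_partition_count (d r r' : ℕ)
    (hd : 1 ≤ d) (hr : 1 ≤ r) (hr'1 : 1 ≤ r') (hr'r : r' ≤ r) :
    Nat.card {p : Finset (Finset (Fin (d * r))) //
      IsPartition p ∧ p.card = d * r' ∧
      permAct ((finRotate (d * r)) ^ r) p = p ∧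
      ∀ B ∈ p, ∀ C ∈ orbitPartition ((finRotate (d * r)) ^ r), (B ∩ C).card ≤ 1}
    = stirling2 r r' * d ^ (r - r') :=
  transverse_fixed_partition_count_general d r r' hd
end

section
/- Let m > 0 and let σ = (1 2 ⋯ m) act on the tensor power V^{⊗m} of a graded vector space V by signed permutation of factors, i.e. on homogeneous tensors v_1⊗⋯⊗v_m of degrees k_1,…,k_m, σ·(v_1⊗⋯⊗v_m) = ±(v_{σ^{-1}(1)}⊗⋯⊗v_{σ^{-1}(m)}) with the Koszul sign. Then the trace of σ on the degree-j component of V^{⊗m} is 0 unless m divides j, and on the degree-km component it equals (−1)^{k(m−1)}·dim V^k (assuming V is finite-dimensional in each degree). Equivalently, the graded character series satisfies Σ_j (−1)^j tr(σ : (V^{⊗m})^j) T^j = Σ_k (−1)^k dim(V^k) T^{km}. -/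
/-- The trace of the standard `(M+1)`-cycle acting with Koszul signs on the degree-`j`
component of the `(M+1)`-st tensor power of a graded vector space with homogeneous
basis `Σ k : Fin N, Fin (b k)` (a basis vector `(k, t)` has degree `k`).  The basis of
the tensor power is indexed by `v : Fin (M+1) → Σ k, Fin (b k)`; the cycle sends the
basis vector indexed by `v` to `±` the one indexed by `v ∘ σ⁻¹`, the Koszul sign being
`(-1)^(deg v(last) · Σ_{i ≠ last} deg v(i))`, so the trace is the signed count of the
fixed indices of degree `j`. -/
def cycleTrace (N M : ℕ) (b : Fin N → ℕ) (j : ℕ) : ℤ :=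
  ∑ v ∈ Finset.univ.filter
      (fun v : Fin (M + 1) → (Σ k : Fin N, Fin (b k)) =>
        (∀ i, v (finRotate (M + 1) i) = v i) ∧ (∑ i, ((v i).1 : ℕ)) = j),
    (-1 : ℤ) ^ (((v (Fin.last M)).1 : ℕ) *
      ∑ i ∈ Finset.univ.erase (Fin.last M), ((v i).1 : ℕ))

lemma negpow_congr (a c : ℕ) (h : a % 2 = c % 2) : (-1:ℤ)^a = (-1)^c := by
  rcases Nat.even_or_odd c with hc | hc
  · have ha : Even a := by rw [Nat.even_iff]; rw [Nat.even_iff] at hc; omega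
    rw [ha.neg_one_pow, hc.neg_one_pow]
  · have ha : Odd a := by rw [Nat.odd_iff]; rw [Nat.odd_iff] at hc; omega
    rw [ha.neg_one_pow, hc.neg_one_pow]

lemma const_of_fixed {α : Type*} {M : ℕ} (v : Fin (M+1) → α)
    (h : ∀ i, v (finRotate (M + 1) i) = v i) (i : Fin (M+1)) : v i = v 0 := by
  induction i using Fin.induction with
  | zero => rfl
  | succ i ih =>
    have h2 := h i.castSucc
    rw [finRotate_succ_apply, Fin.coeSucc_eq_succ] at h2
    rw [h2]; exact ih

lemma cycleTrace_eq (N M : ℕ) (b : Fin N → ℕ) (j : ℕ) :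
    cycleTrace N M b j =
      ∑ k : Fin N, if (M + 1) * (k : ℕ) = j then (b k : ℤ) * (-1) ^ ((k : ℕ) * M) else 0 := by
  have step1 : cycleTrace N M b j =
      ∑ c ∈ Finset.univ.filter (fun c : Σ k : Fin N, Fin (b k) => (M + 1) * (c.1 : ℕ) = j),
        (-1 : ℤ) ^ ((c.1 : ℕ) * M) := by
    unfold cycleTrace
    refine Finset.sum_bij' (fun v _ => v (Fin.last M)) (fun c _ => fun _ => c) ?_ ?_ ?_ ?_ ?_
    · intro v hv
      simp only [Finset.mem_filter, Finset.mem_univ, true_and] at hv ⊢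
      obtain ⟨hfix, hsum⟩ := hv
      have hc := const_of_fixed v hfix
      have hconst : ∑ i, ((v i).1 : ℕ) = (M + 1) * ((v (Fin.last M)).1 : ℕ) := by
        have h1 : ∀ i, ((v i).1 : ℕ) = ((v (Fin.last M)).1 : ℕ) := by
          intro i; rw [hc i, hc (Fin.last M)]
        rw [Finset.sum_congr rfl (fun i _ => h1 i)]
        simp [mul_comm]
      omega
    · intro c hc
      simp only [Finset.mem_filter, Finset.mem_univ, true_and] at hc
      simp [Finset.mem_filter, ← hc, mul_comm]
    · intro v hv
      simp only [Finset.mem_filter, Finset.mem_univ, true_and] at hv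
      funext i
      exact (const_of_fixed v hv.1 (Fin.last M)).trans (const_of_fixed v hv.1 i).symm
    · intro c hc; rfl
    · intro v hv
      simp only [Finset.mem_filter, Finset.mem_univ, true_and] at hv
      have hc := const_of_fixed v hv.1
      set k : ℕ := ((v (Fin.last M)).1 : ℕ) with hk
      have hsum : ∑ i ∈ Finset.univ.erase (Fin.last M), ((v i).1 : ℕ) = M * k := by
        have h1 : ∀ i ∈ Finset.univ.erase (Fin.last M), ((v i).1 : ℕ) = k := by
          intro i _; rw [hk, hc i, hc (Fin.last M)]
        rw [Finset.sum_congr rfl h1]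
        simp [Finset.card_erase_of_mem, mul_comm]
      rw [hsum]
      refine negpow_congr _ _ ?_
      rcases Nat.even_or_odd k with h | h
      · rw [Nat.even_iff] at h
        simp [Nat.mul_mod, h]
      · rw [Nat.odd_iff] at h
        simp [Nat.mul_mod, h]
  rw [step1, Finset.sum_filter, ← Finset.univ_sigma_univ, Finset.sum_sigma]
  refine Finset.sum_congr rfl fun k _ => ?_
  by_cases h : (M + 1) * (k : ℕ) = j <;> simp [h, mul_comm]

lemma sign_helper (k M : ℕ) :
    (-1:ℤ) ^ (k * (M + 1)) * ((-1:ℤ) ^ (k * M)) = (-1) ^ k := by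
  rw [← pow_add]
  refine negpow_congr _ _ ?_
  rcases Nat.even_or_odd k with h | h
  · rw [Nat.even_iff] at h
    simp [Nat.add_mod, Nat.mul_mod, h]
  · rw [Nat.odd_iff] at h
    simp [Nat.add_mod, Nat.mul_mod, h]
    omega

/-- The trace of the `m`-cycle (`m = M+1 > 0`) on the degree-`j` part of the `m`-th
graded tensor power is `0` unless `m ∣ j`, equals `(-1)^(k(m-1))·dim V^k` in degree
`k·m`, and the graded character series is `Σ_k (-1)^k dim V^k T^{km}`. -/
theorem cycle_trace_tensor_power (N M : ℕ) (b : Fin N → ℕ) :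
    (∀ j : ℕ, ¬ (M + 1) ∣ j → cycleTrace N M b j = 0) ∧
    (∀ k : Fin N,
        cycleTrace N M b ((k : ℕ) * (M + 1)) = (-1 : ℤ) ^ ((k : ℕ) * M) * (b k : ℤ)) ∧
    (∑ j ∈ Finset.range (N * (M + 1)),
        Polynomial.C ((-1 : ℤ) ^ j * cycleTrace N M b j) * Polynomial.X ^ j
      = ∑ k : Fin N,
          Polynomial.C ((-1 : ℤ) ^ (k : ℕ) * (b k : ℤ))
            * Polynomial.X ^ ((k : ℕ) * (M + 1))) := by
  refine ⟨?_, ?_, ?_⟩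
  · intro j hj
    rw [cycleTrace_eq]
    refine Finset.sum_eq_zero fun k _ => ?_
    rw [if_neg]
    intro h; exact hj ⟨(k : ℕ), h.symm⟩
  · intro k
    rw [cycleTrace_eq]
    rw [Finset.sum_eq_single k]
    · rw [if_pos (by ring), mul_comm]
    · intro k' _ hk'
      rw [if_neg]
      intro h
      apply hk'
      apply Fin.ext
      rw [mul_comm (k : ℕ)] at h
      exact Nat.eq_of_mul_eq_mul_left (Nat.succ_pos M) h
    · simp
  · have key : ∀ j ∈ Finset.range (N * (M + 1)),
        Polynomial.C ((-1 : ℤ) ^ j * cycleTrace N M b j) * Polynomial.X ^ j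
        = ∑ k : Fin N, if (M + 1) * (k : ℕ) = j then
            Polynomial.C ((-1 : ℤ) ^ j * ((b k : ℤ) * (-1) ^ ((k : ℕ) * M)))
              * Polynomial.X ^ j else 0 := by
      intro j _
      rw [cycleTrace_eq, Finset.mul_sum, map_sum, Finset.sum_mul]
      refine Finset.sum_congr rfl fun k _ => ?_
      by_cases h : (M + 1) * (k : ℕ) = j <;> simp [h]
    rw [Finset.sum_congr rfl key, Finset.sum_comm]
    refine Finset.sum_congr rfl fun k _ => ?_
    rw [Finset.sum_ite_eq (Finset.range (N * (M + 1))) ((M + 1) * (k : ℕ))]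
    have hmem : (M + 1) * (k : ℕ) ∈ Finset.range (N * (M + 1)) := by
      rw [Finset.mem_range, mul_comm N]
      exact (Nat.mul_lt_mul_left (Nat.succ_pos M)).mpr k.2
    rw [if_pos hmem, mul_comm (M + 1) (k : ℕ)]
    congr 1
    congr 1
    rw [mul_comm ((b k : ℤ)) ((-1:ℤ) ^ ((k : ℕ) * M)), ← mul_assoc, sign_helper]
end
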